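/- arXiv:2410.10709 — 4 statements merged into one kernel-verified Lean document; each statement's English description precedes it below -/
import Mathlib

section
/- Let g be a formal power series over a field with nonzero constant term, and f a formal power series with zero constant term and nonzero linear coefficient. If A(z) = ∑ a_k z^k and B(z) = ∑ b_k z^k, then for every n, b_n = ∑_{k≥0} a_k · [z^n](g·f^k) if and only if B = g · (A ∘ f). (Fundamental Theorem of Riordan Arrays) -/
open PowerSeries

variable {K : Type*} [Field K]

/-- Composition (substitution) of formal power series: `pcomp A f = A ∘ f`,
intended for `f` with zero constant term, where `coeff K n (f ^ k) = 0` for `k > n`. -/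
noncomputable def pcomp (A f : PowerSeries K) : PowerSeries K :=
  PowerSeries.mk fun n => ∑ k ∈ Finset.range (n + 1), coeff k A * coeff n (f ^ k)

lemma pow_coeff_eq_zero (f : PowerSeries K) (hf0 : constantCoeff f = 0) {n k : ℕ}
    (h : n < k) : coeff n (f ^ k) = 0 := by
  have hdvd : (X : PowerSeries K) ^ k ∣ f ^ k :=
    pow_dvd_pow_of_dvd (X_dvd_iff.mpr hf0) k
  exact X_pow_dvd_iff.mp hdvd n h

lemma key (g f A : PowerSeries K) (hf0 : constantCoeff f = 0) (n : ℕ) :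
    coeff n (g * pcomp A f) =
      ∑ k ∈ Finset.range (n + 1), coeff k A * coeff n (g * f ^ k) := by
  rw [coeff_mul]
  have h1 : ∀ p ∈ Finset.HasAntidiagonal.antidiagonal n,
      coeff p.1 g * coeff p.2 (pcomp A f) =
        ∑ k ∈ Finset.range (n + 1), coeff k A * (coeff p.1 g * coeff p.2 (f ^ k)) := by
    intro p hp
    have hle : p.2 ≤ n := Finset.HasAntidiagonal.antidiagonal.snd_le hp
    rw [pcomp, coeff_mk, Finset.mul_sum]
    rw [Finset.sum_subset (Finset.range_subset_range.mpr (Nat.succ_le_succ hle))]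
    · apply Finset.sum_congr rfl; intro k _; ring
    · intro k _ hk
      rw [pow_coeff_eq_zero f hf0 (by simp at hk; omega)]
      ring
  rw [Finset.sum_congr rfl h1, Finset.sum_comm]
  apply Finset.sum_congr rfl
  intro k _
  rw [coeff_mul, Finset.mul_sum]

/-- Fundamental Theorem of Riordan Arrays. -/
theorem stmt0 (g f A B : PowerSeries K)
    (hg : constantCoeff g ≠ 0) (hf0 : constantCoeff f = 0)
    (hf1 : coeff 1 f ≠ 0) :
    (∀ n : ℕ, coeff n B = ∑ᶠ k : ℕ, coeff k A * coeff n (g * f ^ k)) ↔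
      B = g * pcomp A f := by
  have hfin : ∀ n : ℕ, (∑ᶠ k : ℕ, coeff k A * coeff n (g * f ^ k)) =
      ∑ k ∈ Finset.range (n + 1), coeff k A * coeff n (g * f ^ k) := by
    intro n
    apply finsum_eq_finset_sum_of_support_subset
    intro k hk
    simp only [Function.mem_support] at hk
    simp only [Finset.coe_range, Set.mem_Iio]
    by_contra hkn
    apply hk
    have : coeff n (g * f ^ k) = 0 := by
      rw [coeff_mul]
      apply Finset.sum_eq_zero
      intro p hp
      rw [pow_coeff_eq_zero f hf0 (lt_of_le_of_lt (Finset.HasAntidiagonal.antidiagonal.snd_le hp) (by omega))]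
      ring
    rw [this, mul_zero]
  constructor
  · intro h
    ext n
    rw [h n, hfin n, key g f A hf0 n]
  · intro h n
    rw [h, hfin n, key g f A hf0 n]
end

section
/- If g is an even formal power series with nonzero constant term and f₁, f₂ are odd formal power series with nonzero linear coefficient, then the product rule (g,f₁,f₂)*(G,F₁,F₂) = (g·(G∘h), (f₁/h)·(F₁∘h), (f₂/h)·(F₂∘h)) with h = √(f₁f₂) is well-defined: h is an odd power series with zero constant term and nonzero linear coefficient, and the three resulting series are respectively even with nonzero constant term and odd with nonzero linear coefficient. -/
open PowerSeries

variable {K : Type*} [Field K]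

/-- A formal power series is even if all its odd coefficients vanish. -/
def IsEvenPS (g : PowerSeries K) : Prop := ∀ n : ℕ, Odd n → coeff n g = 0

/-- A formal power series is odd if all its even coefficients vanish. -/
def IsOddPS (f : PowerSeries K) : Prop := ∀ n : ℕ, Even n → coeff n f = 0

lemma odd_pow_parity (h : PowerSeries K) (hh : IsOddPS h) :
    ∀ (k n : ℕ), ¬ Even (n + k) → coeff n (h ^ k) = 0 := by
  intro k
  induction k with
  | zero =>
    intro n hn
    rw [pow_zero, coeff_one, if_neg]
    rintro rfl; exact hn (by simp)
  | succ k ih =>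
    intro n hn
    rw [pow_succ, coeff_mul]
    apply Finset.sum_eq_zero
    intro p hp
    rw [Finset.HasAntidiagonal.mem_antidiagonal] at hp
    by_cases h1 : Even (p.1 + k)
    · by_cases h2 : Even p.2
      · rw [hh p.2 h2, mul_zero]
      · exfalso; apply hn
        simp only [Nat.even_iff] at *
        omega
    · rw [ih p.1 h1, zero_mul]

lemma even_mul_even (a b : PowerSeries K) (ha : IsEvenPS a) (hb : IsEvenPS b) :
    IsEvenPS (a * b) := by
  intro n hn
  rw [coeff_mul]
  apply Finset.sum_eq_zero
  intro p hp
  rw [Finset.HasAntidiagonal.mem_antidiagonal] at hp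
  by_cases h1 : Odd p.1
  · rw [ha p.1 h1, zero_mul]
  · rw [hb p.2 (by simp only [Nat.odd_iff] at *; omega), mul_zero]

lemma even_mul_odd (a b : PowerSeries K) (ha : IsEvenPS a) (hb : IsOddPS b) :
    IsOddPS (a * b) := by
  intro n hn
  rw [coeff_mul]
  apply Finset.sum_eq_zero
  intro p hp
  rw [Finset.HasAntidiagonal.mem_antidiagonal] at hp
  by_cases h1 : Odd p.1
  · rw [ha p.1 h1, zero_mul]
  · rw [hb p.2 (by simp only [Nat.even_iff, Nat.odd_iff] at *; omega), mul_zero]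

lemma pcomp_even (G h : PowerSeries K) (hG : IsEvenPS G) (hh : IsOddPS h) :
    IsEvenPS (pcomp G h) := by
  intro n hn
  rw [pcomp, coeff_mk]
  apply Finset.sum_eq_zero
  intro k _
  by_cases hk : Odd k
  · rw [hG k hk, zero_mul]
  · rw [odd_pow_parity h hh k n (by simp only [Nat.even_iff, Nat.odd_iff] at *; omega), mul_zero]

lemma pcomp_odd (F h : PowerSeries K) (hF : IsOddPS F) (hh : IsOddPS h) :
    IsOddPS (pcomp F h) := by
  intro n hn
  rw [pcomp, coeff_mk]
  apply Finset.sum_eq_zero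
  intro k _
  by_cases hk : Even k
  · rw [hF k hk, zero_mul]
  · rw [odd_pow_parity h hh k n (by simp only [Nat.even_iff] at *; omega), mul_zero]

lemma pcomp_coeff_zero (A h : PowerSeries K) : constantCoeff (pcomp A h) = constantCoeff A := by
  rw [← coeff_zero_eq_constantCoeff_apply, ← coeff_zero_eq_constantCoeff_apply, pcomp, coeff_mk]
  simp

lemma pcomp_coeff_one (A h : PowerSeries K) :
    coeff 1 (pcomp A h) = coeff 1 A * coeff 1 h := by
  rw [pcomp, coeff_mk]
  rw [Finset.sum_range_succ, Finset.sum_range_one]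
  simp [coeff_one, pow_one]

lemma coeff_one_mul' (a b : PowerSeries K) :
    coeff 1 (a * b) = constantCoeff a * coeff 1 b + coeff 1 a * constantCoeff b := by
  rw [coeff_mul]
  rw [Finset.Nat.sum_antidiagonal_eq_sum_range_succ_mk]
  rw [Finset.sum_range_succ, Finset.sum_range_one]
  simp

lemma coeff_two_mul' (a b : PowerSeries K) :
    coeff 2 (a * b) = constantCoeff a * coeff 2 b + coeff 1 a * coeff 1 b
      + coeff 2 a * constantCoeff b := by
  rw [coeff_mul]
  rw [Finset.Nat.sum_antidiagonal_eq_sum_range_succ_mk]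
  rw [Finset.sum_range_succ, Finset.sum_range_succ, Finset.sum_range_one]
  simp

lemma rescale_neg_of_odd (h : PowerSeries K) (hh : IsOddPS h) :
    rescale (-1 : K) h = -h := by
  ext n
  rw [coeff_rescale, map_neg]
  by_cases hn : Even n
  · rw [hh n hn]; simp
  · rw [Nat.not_even_iff_odd] at hn
    rw [hn.neg_one_pow]; ring

lemma side_part [CharZero K] (h q f F : PowerSeries K)
    (hh : IsOddPS h) (h0 : constantCoeff h = 0) (h1 : coeff 1 h ≠ 0)
    (hf : IsOddPS f) (hf1 : coeff 1 f ≠ 0)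
    (hF : IsOddPS F) (hF1 : coeff 1 F ≠ 0)
    (hq : q * h = f) :
    IsOddPS (q * pcomp F h) ∧ coeff 1 (q * pcomp F h) ≠ 0 := by
  have hne : h ≠ 0 := fun e => h1 (by rw [e]; simp)
  have hr := congrArg (rescale (-1 : K)) hq
  rw [map_mul, rescale_neg_of_odd h hh, rescale_neg_of_odd f hf, ← hq, mul_neg, neg_inj] at hr
  have hqe : rescale (-1 : K) q = q := mul_right_cancel₀ hne hr
  have hqeven : IsEvenPS q := by
    intro n hn
    have hc := congrArg (coeff n) hqe
    rw [coeff_rescale, hn.neg_one_pow] at hc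
    have h2 : (2 : K) * coeff n q = 0 := by linear_combination -hc
    exact (mul_eq_zero.mp h2).resolve_left two_ne_zero
  have hq0 : constantCoeff q ≠ 0 := by
    have hc : coeff 1 f = constantCoeff q * coeff 1 h := by
      rw [← hq, coeff_one_mul', h0]; ring
    intro e; rw [hc, e, zero_mul] at hf1; exact hf1 rfl
  have hF0 : constantCoeff (pcomp F h) = 0 := by
    rw [pcomp_coeff_zero, ← coeff_zero_eq_constantCoeff_apply]; exact hF 0 Even.zero
  refine ⟨even_mul_odd _ _ hqeven (pcomp_odd F h hF hh), ?_⟩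
  rw [coeff_one_mul', hF0, mul_zero, add_zero, pcomp_coeff_one]
  exact mul_ne_zero hq0 (mul_ne_zero hF1 h1)

/-- Well-definedness of the Double Riordan product: with h the odd square root
of f₁f₂ and q₁ = f₁/h, q₂ = f₂/h, h has zero constant term and nonzero linear
coefficient, and the three product components are respectively even with nonzero
constant term, and odd with nonzero linear coefficient. -/
theorem stmt4 [CharZero K] (g f₁ f₂ G F₁ F₂ h q₁ q₂ : PowerSeries K)
    (hg : IsEvenPS g) (hg0 : constantCoeff g ≠ 0)
    (hf₁ : IsOddPS f₁) (hf₁1 : coeff 1 f₁ ≠ 0)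
    (hf₂ : IsOddPS f₂) (hf₂1 : coeff 1 f₂ ≠ 0)
    (hG : IsEvenPS G) (hG0 : constantCoeff G ≠ 0)
    (hF₁ : IsOddPS F₁) (hF₁1 : coeff 1 F₁ ≠ 0)
    (hF₂ : IsOddPS F₂) (hF₂1 : coeff 1 F₂ ≠ 0)
    (hh : IsOddPS h) (hsq : h ^ 2 = f₁ * f₂)
    (hq₁ : q₁ * h = f₁) (hq₂ : q₂ * h = f₂) :
    constantCoeff h = 0 ∧ coeff 1 h ≠ 0 ∧
    IsEvenPS (g * pcomp G h) ∧ constantCoeff (g * pcomp G h) ≠ 0 ∧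
    IsOddPS (q₁ * pcomp F₁ h) ∧ coeff 1 (q₁ * pcomp F₁ h) ≠ 0 ∧
    IsOddPS (q₂ * pcomp F₂ h) ∧ coeff 1 (q₂ * pcomp F₂ h) ≠ 0 := by
  have h0 : constantCoeff h = 0 := by
    rw [← coeff_zero_eq_constantCoeff_apply]; exact hh 0 Even.zero
  have hf10 : constantCoeff f₁ = 0 := by
    rw [← coeff_zero_eq_constantCoeff_apply]; exact hf₁ 0 Even.zero
  have hf20 : constantCoeff f₂ = 0 := by
    rw [← coeff_zero_eq_constantCoeff_apply]; exact hf₂ 0 Even.zero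
  have h1 : coeff 1 h ≠ 0 := by
    have e2 : coeff 2 (h ^ 2) = coeff 1 h * coeff 1 h := by
      rw [pow_two, coeff_two_mul', h0, hh 2 (by norm_num)]; ring
    have e2' : coeff 2 (f₁ * f₂) = coeff 1 f₁ * coeff 1 f₂ := by
      rw [coeff_two_mul', hf10, hf20]; ring
    intro hc
    apply mul_ne_zero hf₁1 hf₂1
    rw [← e2', ← hsq, e2, hc, mul_zero]
  have s1 := side_part h q₁ f₁ F₁ hh h0 h1 hf₁ hf₁1 hF₁ hF₁1 hq₁
  have s2 := side_part h q₂ f₂ F₂ hh h0 h1 hf₂ hf₂1 hF₂ hF₂1 hq₂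
  refine ⟨h0, h1, even_mul_even _ _ hg (pcomp_even G h hG hh), ?_, s1.1, s1.2, s2.1, s2.2⟩
  rw [map_mul, pcomp_coeff_zero]
  exact mul_ne_zero hg0 hG0
end

section
/- The set of triples (g(z²), z, f(z²)/z), where g ranges over formal power series with nonzero constant term and f over formal power series with zero constant term and nonzero linear coefficient, is closed under Double Riordan multiplication: (g(z²), z, f(z²)/z) * (G(z²), z, F(z²)/z) = (g(z²)·G(f(z²)), z, F(f(z²))/z). -/
open PowerSeries

variable {K : Type*} [Field K]

lemma coeff_pow_zero_of_lt {f : PowerSeries K} (hf : constantCoeff f = 0)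
    {k n : ℕ} (hnk : n < k) : coeff n (f ^ k) = 0 := by
  have hX : (X : PowerSeries K) ∣ f := X_dvd_iff.mpr hf
  have hXk : (X : PowerSeries K) ^ k ∣ f ^ k := pow_dvd_pow_of_dvd hX k
  exact (X_pow_dvd_iff.mp hXk) n hnk

lemma coeff_pcomp' {f : PowerSeries K} (hf : constantCoeff f = 0)
    (A : PowerSeries K) {n m : ℕ} (hnm : n < m) :
    coeff n (pcomp A f) = ∑ k ∈ Finset.range m, coeff k A * coeff n (f ^ k) := by
  rw [pcomp, coeff_mk]
  apply Finset.sum_subset (Finset.range_subset_range.mpr hnm)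
  intro k hk hk'
  rw [Finset.mem_range] at hk hk'
  rw [coeff_pow_zero_of_lt hf (by omega), mul_zero]

lemma pcomp_coeff_trunc {f : PowerSeries K} (hf : constantCoeff f = 0)
    (A : PowerSeries K) {n m : ℕ} (hnm : n < m) :
    coeff n (pcomp A f) = coeff n ((trunc m A).eval₂ C f) := by
  rw [eval₂_trunc_eq_sum_range, coeff_pcomp' hf A hnm, map_sum]
  apply Finset.sum_congr rfl
  intro k _
  rw [coeff_C_mul]

lemma coeff_eval₂_zero {f : PowerSeries K} (hf : constantCoeff f = 0)
    (P : Polynomial K) {n : ℕ} (hP : ∀ k ≤ n, P.coeff k = 0) :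
    coeff n (P.eval₂ C f) = 0 := by
  rw [Polynomial.eval₂_eq_sum, Polynomial.sum_def, map_sum]
  apply Finset.sum_eq_zero
  intro k _
  rw [coeff_C_mul]
  by_cases hk : k ≤ n
  · rw [hP k hk, zero_mul]
  · rw [coeff_pow_zero_of_lt hf (by omega), mul_zero]

lemma pcomp_mul {f : PowerSeries K} (hf : constantCoeff f = 0)
    (A B : PowerSeries K) : pcomp (A * B) f = pcomp A f * pcomp B f := by
  ext n
  have key : coeff n (pcomp (A * B) f)
      = coeff n ((trunc (n+1) A * trunc (n+1) B).eval₂ C f) := by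
    rw [pcomp_coeff_trunc hf (A * B) (Nat.lt_succ_self n)]
    have hdiff : coeff n ((trunc (n+1) (A*B) - trunc (n+1) A * trunc (n+1) B).eval₂ C f) = 0 := by
      apply coeff_eval₂_zero hf
      intro k hk
      rw [Polynomial.coeff_sub, coeff_trunc, if_pos (by omega), Polynomial.coeff_mul,
        PowerSeries.coeff_mul, sub_eq_zero]
      apply Finset.sum_congr rfl
      intro p hp
      rw [Finset.HasAntidiagonal.mem_antidiagonal] at hp
      rw [coeff_trunc, coeff_trunc, if_pos (by omega), if_pos (by omega)]
    rw [Polynomial.eval₂_sub, map_sub, sub_eq_zero] at hdiff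
    exact hdiff
  rw [key, Polynomial.eval₂_mul, PowerSeries.coeff_mul, PowerSeries.coeff_mul]
  apply Finset.sum_congr rfl
  intro p hp
  rw [Finset.HasAntidiagonal.mem_antidiagonal] at hp
  rw [← pcomp_coeff_trunc hf A (show p.1 < n+1 by omega),
    ← pcomp_coeff_trunc hf B (show p.2 < n+1 by omega)]

lemma coeff_pcomp_Xsq (G : PowerSeries K) (k : ℕ) :
    coeff k (pcomp G (X ^ 2)) = if 2 ∣ k then coeff (k / 2) G else 0 := by
  rw [pcomp, coeff_mk]
  simp only [← pow_mul, coeff_X_pow]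
  by_cases hk : 2 ∣ k
  · obtain ⟨m, rfl⟩ := hk
    rw [if_pos ⟨m, rfl⟩, Finset.sum_eq_single m]
    · rw [if_pos rfl, mul_one, Nat.mul_div_cancel_left m (by norm_num)]
    · intro j _ hj
      rw [if_neg (by omega), mul_zero]
    · intro hm
      exact absurd (Finset.mem_range.mpr (by omega)) hm
  · rw [if_neg hk]
    apply Finset.sum_eq_zero
    intro j _
    rw [if_neg (by rintro rfl; exact hk ⟨j, rfl⟩), mul_zero]

lemma sum_range_two_mul (F : ℕ → K) (m : ℕ) :
    ∑ k ∈ Finset.range (2 * m), F k = ∑ j ∈ Finset.range m, (F (2 * j) + F (2 * j + 1)) := by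
  induction m with
  | zero => simp
  | succ m ih =>
    rw [show 2 * (m + 1) = 2 * m + 1 + 1 from by ring, Finset.sum_range_succ,
      Finset.sum_range_succ, ih, Finset.sum_range_succ]
    ring

lemma pcomp_pcomp_Xsq {h : PowerSeries K} (hh : constantCoeff h = 0)
    (G : PowerSeries K) : pcomp (pcomp G (X ^ 2)) h = pcomp G (h ^ 2) := by
  ext n
  have hc2 : constantCoeff (h ^ 2) = 0 := by rw [map_pow, hh]; ring
  rw [coeff_pcomp' hh _ (show n < 2 * (n + 1) by omega),
    coeff_pcomp' hc2 G (Nat.lt_succ_self n), sum_range_two_mul]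
  apply Finset.sum_congr rfl
  intro j _
  rw [coeff_pcomp_Xsq, coeff_pcomp_Xsq, if_pos ⟨j, rfl⟩, if_neg (by omega),
    Nat.mul_div_cancel_left j (by norm_num), zero_mul, add_zero, ← pow_mul]

lemma pcomp_X {h : PowerSeries K} (hh : constantCoeff h = 0) :
    pcomp X h = h := by
  ext n
  rw [pcomp, coeff_mk]
  simp only [coeff_X]
  cases n with
  | zero =>
    rw [Finset.sum_range_one, if_neg (by omega : ¬(0:ℕ) = 1), zero_mul,
      coeff_zero_eq_constantCoeff, hh]
  | succ n =>
    rw [Finset.sum_eq_single 1]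
    · rw [if_pos rfl, one_mul, pow_one]
    · intro j _ hj
      rw [if_neg hj, zero_mul]
    · intro h1
      exact absurd (Finset.mem_range.mpr (by omega)) h1

/-- Closure of the type-1 almost Appell set under Double Riordan multiplication:
(g(z²), z, f(z²)/z) * (G(z²), z, F(z²)/z) = (g(z²)·G(f(z²)), z, F(f(z²))/z).
Here fc = f(z²)/z and Fc = F(z²)/z (witnessed by X·fc = f(z²), X·Fc = F(z²)),
h is the odd square root of f₁f₂ = z·(f(z²)/z) = f(z²), a = z/h and b = fc/h. -/
theorem stmt5 (g f G F fc Fc h a b : PowerSeries K)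
    (hg : constantCoeff g ≠ 0)
    (hf0 : constantCoeff f = 0) (hf1 : coeff 1 f ≠ 0)
    (hG : constantCoeff G ≠ 0)
    (hF0 : constantCoeff F = 0) (hF1 : coeff 1 F ≠ 0)
    (hfc : X * fc = pcomp f (X ^ 2)) (hFc : X * Fc = pcomp F (X ^ 2))
    (hh : IsOddPS h) (hsq : h ^ 2 = X * fc)
    (ha : a * h = X) (hb : b * h = fc) :
    pcomp g (X ^ 2) * pcomp (pcomp G (X ^ 2)) h
        = pcomp g (X ^ 2) * pcomp G (pcomp f (X ^ 2)) ∧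
    a * pcomp X h = X ∧
    X * (b * pcomp Fc h) = pcomp F (pcomp f (X ^ 2)) := by
  have hh0 : constantCoeff h = 0 := by
    have h0 := congrArg (constantCoeff) hsq
    rw [map_pow, map_mul, constantCoeff_X, zero_mul] at h0
    exact pow_eq_zero_iff (by norm_num) |>.mp h0
  have hfc1 : coeff 1 fc = coeff 1 f := by
    have h2 := congrArg (coeff 2) hfc
    rw [coeff_succ_X_mul, coeff_pcomp_Xsq, if_pos ⟨1, rfl⟩] at h2
    exact h2
  have hne : h ≠ 0 := by
    intro h0
    apply hf1
    rw [← hfc1]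
    have : coeff 2 ((0:PowerSeries K)^2) = coeff 2 (X * fc) := by rw [← h0, hsq]
    rwa [zero_pow (by norm_num), map_zero, coeff_succ_X_mul, eq_comm] at this
  have hXb : X * b = h := by
    apply mul_right_cancel₀ hne
    rw [mul_assoc, hb, ← hsq]
    ring
  refine ⟨?_, ?_, ?_⟩
  · rw [pcomp_pcomp_Xsq hh0, hsq, hfc]
  · rw [pcomp_X hh0]; exact ha
  · calc X * (b * pcomp Fc h) = (X * b) * pcomp Fc h := by ring
      _ = h * pcomp Fc h := by rw [hXb]
      _ = pcomp X h * pcomp Fc h := by rw [pcomp_X hh0]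
      _ = pcomp (X * Fc) h := (pcomp_mul hh0 X Fc).symm
      _ = pcomp (pcomp F (X ^ 2)) h := by rw [hFc]
      _ = pcomp F (h ^ 2) := pcomp_pcomp_Xsq hh0 F
      _ = pcomp F (pcomp f (X ^ 2)) := by rw [hsq, hfc]
end

section
/- For formal power series f₁,...,f_k with zero constant term and nonzero linear coefficient, set j(z^k)^k = (∏_i f_i(z^k))/z^{k(k-1)}. Then substituting z^{k+1} for z^k gives j^k(z^{k+1}) = (∏_i f_i(z^{k+1}))/z^{(k+1)(k-1)} = h^{k+1}(z^{k+1}), where h is the (k+1)-st root used in the (k+1)-Riordan product of the corresponding arrays with inserted multiplier z. -/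
open PowerSeries

variable {K : Type*} [Field K]

lemma coeff_pcomp_Xpow (m : ℕ) (hm : 1 ≤ m) (A : PowerSeries K) (n : ℕ) :
    coeff n (pcomp A (X ^ m)) = if m ∣ n then coeff (n / m) A else 0 := by
  simp only [pcomp, coeff_mk, ← pow_mul, coeff_X_pow]
  split_ifs with h
  · obtain ⟨s, rfl⟩ := h
    rw [Finset.sum_eq_single s]
    · simp [Nat.mul_div_cancel_left s (by omega : 0 < m)]
    · intro b _ hb
      have : ¬ (m * s = m * b) := fun h => hb (by
        exact (Nat.eq_of_mul_eq_mul_left (by omega) h).symm)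
      simp [this]
    · intro hs
      exact absurd (Finset.mem_range.2 (by nlinarith [Nat.one_le_iff_ne_zero.1 hm])) hs
  · apply Finset.sum_eq_zero
    intro t _
    have : ¬ (n = m * t) := fun hn => h ⟨t, hn⟩
    simp [this]

lemma pcomp_Xpow_mul (m : ℕ) (hm : 1 ≤ m) (A B : PowerSeries K) :
    pcomp (A * B) (X ^ m) = pcomp A (X ^ m) * pcomp B (X ^ m) := by
  ext n
  rw [coeff_mul, Finset.Nat.sum_antidiagonal_eq_sum_range_succ_mk]
  simp only [coeff_pcomp_Xpow m hm]
  by_cases h : m ∣ n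
  · obtain ⟨s, rfl⟩ := h
    rw [if_pos ⟨s, rfl⟩, Nat.mul_div_cancel_left s (by omega : 0 < m), coeff_mul,
      Finset.Nat.sum_antidiagonal_eq_sum_range_succ_mk]
    have hsub : (Finset.range (s + 1)).image (fun u => m * u) ⊆ Finset.range (m * s + 1) := by
      intro i hi
      obtain ⟨u, hu, rfl⟩ := Finset.mem_image.1 hi
      have := Finset.mem_range.1 hu
      exact Finset.mem_range.2 (by nlinarith)
    have hzero : ∀ i ∈ Finset.range (m * s + 1),
        i ∉ (Finset.range (s + 1)).image (fun u => m * u) →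
        (if m ∣ i then coeff (i / m) A else 0) *
          (if m ∣ m * s - i then coeff ((m * s - i) / m) B else 0) = 0 := by
      intro i hi hni
      have hnd : ¬ m ∣ i := by
        rintro ⟨u, rfl⟩
        refine hni (Finset.mem_image.2 ⟨u, Finset.mem_range.2 ?_, rfl⟩)
        have hlt := Finset.mem_range.1 hi
        have h2 : m * u ≤ m * s := by omega
        exact Nat.lt_succ_of_le (Nat.le_of_mul_le_mul_left h2 (by omega))
      simp [hnd]
    rw [← Finset.sum_subset hsub hzero,
      Finset.sum_image (fun a _ b _ hab => Nat.eq_of_mul_eq_mul_left (by omega) hab)]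
    apply Finset.sum_congr rfl
    intro u hu
    have h1 : m * s - m * u = m * (s - u) := by rw [Nat.mul_sub]
    rw [h1, if_pos ⟨u, rfl⟩, if_pos ⟨s - u, rfl⟩,
      Nat.mul_div_cancel_left u (by omega : 0 < m),
      Nat.mul_div_cancel_left (s - u) (by omega : 0 < m)]
  · rw [if_neg h]
    apply (Finset.sum_eq_zero ?_).symm
    intro i hi
    by_cases hdi : m ∣ i
    · have hnd : ¬ m ∣ (n - i) := by
        intro hd
        have hile : i ≤ n := by have := Finset.mem_range.1 hi; omega
        exact h (by
          have := Nat.dvd_add hdi hd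
          rwa [Nat.add_sub_cancel' hile] at this)
      simp [hnd]
    · simp [hdi]

lemma pcomp_add (A B f : PowerSeries K) : pcomp (A + B) f = pcomp A f + pcomp B f := by
  ext n
  simp [pcomp, add_mul, Finset.sum_add_distrib]

lemma pcomp_one (m : ℕ) (hm : 1 ≤ m) : pcomp (1 : PowerSeries K) (X ^ m) = 1 := by
  ext n
  rw [coeff_pcomp_Xpow m hm]
  by_cases h : m ∣ n
  · obtain ⟨s, rfl⟩ := h
    rw [if_pos ⟨s, rfl⟩, Nat.mul_div_cancel_left s (by omega : 0 < m), coeff_one, coeff_one]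
    rcases s with _ | s <;> simp [show m ≠ 0 by omega]
  · rw [if_neg h, coeff_one, if_neg (by rintro rfl; exact h ⟨0, by omega⟩)]

noncomputable def pcompXHom (m : ℕ) (hm : 1 ≤ m) : PowerSeries K →+* PowerSeries K where
  toFun A := pcomp A (X ^ m)
  map_one' := pcomp_one m hm
  map_mul' A B := pcomp_Xpow_mul m hm A B
  map_zero' := by ext n; simp [pcomp]
  map_add' A B := pcomp_add A B _

@[simp] lemma pcompXHom_apply (m : ℕ) (hm : 1 ≤ m) (A : PowerSeries K) :
    pcompXHom m hm A = pcomp A (X ^ m) := rfl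

lemma pcompXHom_X (m : ℕ) (hm : 1 ≤ m) : pcompXHom m hm (X : PowerSeries K) = X ^ m := by
  ext n
  rw [pcompXHom_apply, coeff_pcomp_Xpow m hm, coeff_X_pow]
  by_cases h : m ∣ n
  · obtain ⟨s, rfl⟩ := h
    rw [if_pos ⟨s, rfl⟩, Nat.mul_div_cancel_left s (by omega : 0 < m), coeff_X]
    have : (m * s = m) ↔ (s = 1) := by
      constructor
      · intro hh
        exact Nat.eq_of_mul_eq_mul_left (by omega : 0 < m) (by omega : m * s = m * 1)
      · rintro rfl; omega
    simp [this]
  · rw [if_neg h, if_neg (fun hn => h ⟨1, by rw [hn, Nat.mul_one]⟩)]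

lemma pcompXHom_injective (m : ℕ) (hm : 1 ≤ m) :
    Function.Injective (pcompXHom m hm : PowerSeries K →+* PowerSeries K) := by
  intro A B hAB
  ext t
  have h2 := congrArg (coeff (m * t)) hAB
  rw [pcompXHom_apply, pcompXHom_apply, coeff_pcomp_Xpow m hm, coeff_pcomp_Xpow m hm] at h2
  rw [if_pos ⟨t, rfl⟩, if_pos ⟨t, rfl⟩, Nat.mul_div_cancel_left t (by omega : 0 < m)] at h2
  exact h2

/-- If j is the k-th root with j(zᵏ)ᵏ · z^{k(k-1)} = ∏ᵢ fᵢ(zᵏ), then substituting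
z^{k+1} for zᵏ gives j(zᵏ⁺¹)ᵏ · z^{(k+1)(k-1)} = ∏ᵢ fᵢ(zᵏ⁺¹), and
j(zᵏ⁺¹)ᵏ = Hᵏ⁺¹ where H is the (k+1)-st root used in the (k+1)-Riordan
product, i.e. Hᵏ⁺¹ = z · ∏ᵢ (fᵢ(zᵏ⁺¹)/zᵏ). -/
theorem stmt19 (k : ℕ) (hk : 1 ≤ k) (f fcp : Fin k → PowerSeries K)
    (j H : PowerSeries K)
    (hf : ∀ i, constantCoeff (f i) = 0 ∧ coeff 1 (f i) ≠ 0)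
    (hj0 : constantCoeff j = 0) (hj1 : coeff 1 j ≠ 0)
    (hj : X ^ (k * (k - 1)) * (pcomp j (X ^ k)) ^ k = ∏ i, pcomp (f i) (X ^ k))
    (hfcp : ∀ i, X ^ k * fcp i = pcomp (f i) (X ^ (k + 1)))
    (hH0 : constantCoeff H = 0) (hH1 : coeff 1 H ≠ 0)
    (hH : H ^ (k + 1) = X * ∏ i, fcp i) :
    X ^ ((k + 1) * (k - 1)) * (pcomp j (X ^ (k + 1))) ^ k
        = ∏ i, pcomp (f i) (X ^ (k + 1)) ∧
    (pcomp j (X ^ (k + 1))) ^ k = H ^ (k + 1) := by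
  -- the key identity back in the "un-substituted" world
  have key : X ^ (k - 1) * j ^ k = ∏ i, f i := by
    apply pcompXHom_injective k hk
    rw [map_mul, map_pow, map_pow, map_prod, pcompXHom_X, ← pow_mul]
    simpa only [pcompXHom_apply] using hj
  have h1 : X ^ ((k + 1) * (k - 1)) * (pcomp j (X ^ (k + 1))) ^ k
      = ∏ i, pcomp (f i) (X ^ (k + 1)) := by
    have := congrArg (pcompXHom (k + 1) (by omega)) key
    rw [map_mul, map_pow, map_pow, map_prod, pcompXHom_X, ← pow_mul] at this
    simpa only [pcompXHom_apply] using this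
  refine ⟨h1, ?_⟩
  have h2 : ∏ i, pcomp (f i) (X ^ (k + 1)) = X ^ (k * k) * ∏ i, fcp i := by
    have hpf : ∏ i, pcomp (f i) (X ^ (k + 1)) = ∏ i, ((X : PowerSeries K) ^ k * fcp i) :=
      Finset.prod_congr rfl fun i _ => (hfcp i).symm
    rw [hpf, Finset.prod_mul_distrib, Finset.prod_const, Finset.card_univ,
      Fintype.card_fin, ← pow_mul]
  have hexp : (X : PowerSeries K) ^ (k * k) = X ^ ((k + 1) * (k - 1)) * X := by
    rw [← pow_succ]
    congr 1
    cases k with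
    | zero => omega
    | succ p => simp only [Nat.add_sub_cancel]; ring
  have h3 : X ^ ((k + 1) * (k - 1)) * (pcomp j (X ^ (k + 1))) ^ k
      = X ^ ((k + 1) * (k - 1)) * (X * ∏ i, fcp i) := by
    rw [h1, h2, hexp, mul_assoc]
  have hXne : (X : PowerSeries K) ^ ((k + 1) * (k - 1)) ≠ 0 :=
    pow_ne_zero _ X_ne_zero
  rw [hH]
  exact mul_left_cancel₀ hXne h3
end
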